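/- Let V be the atomic Coulomb potential V(x) = −∑_i Z/|x_i| + ∑_{i<j} 1/|x_j−x_i| and let U_P(ε) = {x ∈ ℝ^{3N} : |x_j| > ε for j ∈ P, and |x_j − x_k| > ε for j ∈ P, k ∉ P}. Then for each ε > 0 there exists L_V > 0 such that for all multiindices α ∈ ℕ^{3M} with |α| ≥ 1 (in the directions x_{P_1},…,x_{P_M}), sup over ∩_s U_{P_s}(ε/2) of |∂^α_{x_𝐏} V| ≤ L_V^{|α|+1} |α|!. -/

import Mathlib

open Finset

/-- The vector in `ℝ^{3N}` whose `j`-th block is `e_s/√|P|` for `j ∈ P` and `0` else. -/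
noncomputable def dirVec (N : ℕ) (P : Finset (Fin N)) (s : Fin 3) :
    Fin N → EuclideanSpace ℝ (Fin 3) :=
  fun j => if j ∈ P then (Real.sqrt P.card)⁻¹ • EuclideanSpace.single s 1 else 0

/-- Directional derivative `∂_{x_P}^{e_s}`. -/
noncomputable def pderivP {N : ℕ} (P : Finset (Fin N)) (s : Fin 3)
    (f : (Fin N → EuclideanSpace ℝ (Fin 3)) → ℝ) :
    (Fin N → EuclideanSpace ℝ (Fin 3)) → ℝ :=
  fun x => fderiv ℝ f x (dirVec N P s)

/-- Iterated directional derivative `∂^α_{x_P}` for a multiindex `α ∈ ℕ³`. -/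
noncomputable def pderivPMulti {N : ℕ} (P : Finset (Fin N)) (α : Fin 3 → ℕ)
    (f : (Fin N → EuclideanSpace ℝ (Fin 3)) → ℝ) :
    (Fin N → EuclideanSpace ℝ (Fin 3)) → ℝ :=
  ((pderivP P 0)^[α 0] ∘ (pderivP P 1)^[α 1] ∘ (pderivP P 2)^[α 2]) f

/-- Iterated derivative `∂^{α₁}_{x_{P₁}} ⋯ ∂^{α_M}_{x_{P_M}}`. -/
noncomputable def pderivPFamily {N : ℕ} :
    (M : ℕ) → (Fin M → Finset (Fin N)) → (Fin M → Fin 3 → ℕ) →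
      ((Fin N → EuclideanSpace ℝ (Fin 3)) → ℝ) →
      (Fin N → EuclideanSpace ℝ (Fin 3)) → ℝ
  | 0, _, _, f => f
  | M + 1, P, α, f =>
      pderivPMulti (P 0) (α 0) (pderivPFamily M (P ∘ Fin.succ) (α ∘ Fin.succ) f)

/-- The region `U_P(ε)` where `|x_j| > ε` for `j ∈ P` and `|x_j − x_k| > ε`
for `j ∈ P`, `k ∉ P`. -/
def UP {N : ℕ} (P : Finset (Fin N)) (ε : ℝ) :
    Set (Fin N → EuclideanSpace ℝ (Fin 3)) :=
  {x | (∀ j ∈ P, ε < ‖x j‖) ∧ ∀ j ∈ P, ∀ k ∉ P, ε < ‖x j - x k‖}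

/-- The atomic Coulomb potential on `ℝ^{3N}`. -/
noncomputable def coulombV (N : ℕ) (Z : ℝ)
    (x : Fin N → EuclideanSpace ℝ (Fin 3)) : ℝ :=
  -(∑ i, Z / ‖x i‖) +
    ∑ p ∈ Finset.univ.filter (fun p : Fin N × Fin N => p.1 < p.2),
      1 / ‖x p.2 - x p.1‖

/-!
Write `V = ∑ₜ cₜ ‖ℓₜ x‖⁻¹` with linear forms `ℓₜ` (`x ↦ x_i` and `x ↦ x_k - x_j`).
Every derivative `D_{v₁} ⋯ D_{vₙ} ‖y‖⁻¹` is a sum of monomials `c ∏ ⟪y, w⟫ ‖y‖⁻ᵐ` with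
`w ∈ {v₁, …, vₙ}`, at most `n` factors and `m = n + 1 + #factors`. Differentiating one of them
produces at most `#factors + m ≤ 3n + 1` new ones whose coefficients are no larger (for unit
directions), so the coefficients add up to at most `3ⁿ n!`, and each monomial is bounded by its
coefficient times `‖y‖^{-(n+1)}`.

A term that varies along some direction `x_{P_s}` is at distance more than `ε / 2` from its
singularity on `⋂ₛ U_{P_s}(ε/2)`. The other terms are invariant under translation along all the
directions and contribute nothing, except that `V` may fail to be differentiable where they are
singular; there the derivative is either the junk value `0` or, by unique differentiability on
the dense set where they are smooth, the regular one.
-/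

open RealInnerProductSpace Set Filter Topology
open scoped Nat

theorem inv_pow_eq_sq_rpow {a : ℝ} (ha : 0 ≤ a) (m : ℕ) : a⁻¹ ^ m = (a ^ 2) ^ (-(m : ℝ) / 2) := by
  rw [← Real.rpow_natCast_mul ha, Nat.cast_ofNat, show (2 : ℝ) * (-(m : ℝ) / 2) = -(m : ℝ) by ring,
    Real.rpow_neg ha, Real.rpow_natCast, inv_pow]

theorem hasFDerivAt_inv_norm_pow {F : Type*} [NormedAddCommGroup F] [InnerProductSpace ℝ F]
    {y : F} (hy : y ≠ 0) (m : ℕ) :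
    HasFDerivAt (fun z : F => ‖z‖⁻¹ ^ m) ((-(m : ℝ) * ‖y‖⁻¹ ^ (m + 2)) • innerSL ℝ y) y := by
  have h := (hasStrictFDerivAt_norm_sq y).hasFDerivAt.rpow_const (p := -(m : ℝ) / 2)
    (Or.inl (by positivity))
  simp_rw [← inv_pow_eq_sq_rpow (norm_nonneg _)] at h
  convert h using 1
  rw [show -(m : ℝ) / 2 - 1 = -((m + 2 : ℕ) : ℝ) / 2 by push_cast; ring,
    ← inv_pow_eq_sq_rpow (norm_nonneg _)]
  ext v
  simp only [neg_mul, neg_smul, neg_apply, smul_apply, coe_innerSL_apply, smul_eq_mul,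
    nsmul_eq_mul, Nat.cast_ofNat]
  ring

/-- Encodes `y ↦ coeff * ∏_{w ∈ factors} ⟪y, w⟫ * ‖y‖⁻¹ ^ power` (see `InvNormMonomial.eval`). -/
structure InvNormMonomial (F : Type*) where
  coeff : ℝ
  factors : List F
  power : ℕ

noncomputable section

namespace InvNormMonomial

variable {F : Type*}

def coeffSum (l : List (InvNormMonomial F)) : ℝ := (l.map (|·.coeff|)).sum

theorem coeffSum_nonneg (l : List (InvNormMonomial F)) : 0 ≤ coeffSum l :=
  List.sum_nonneg fun _ h => by obtain ⟨μ, -, rfl⟩ := List.mem_map.mp h; exact abs_nonneg _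

variable [NormedAddCommGroup F] [InnerProductSpace ℝ F]

def eval (μ : InvNormMonomial F) (y : F) : ℝ :=
  μ.coeff * (μ.factors.map (⟪y, ·⟫)).prod * ‖y‖⁻¹ ^ μ.power

def cons (w : F) (μ : InvNormMonomial F) : InvNormMonomial F := ⟨μ.coeff, w :: μ.factors, μ.power⟩

def derivAlong (v : F) : InvNormMonomial F → List (InvNormMonomial F)
  | ⟨c, [], m⟩ => [⟨-m * c, [v], m + 2⟩]
  | ⟨c, w :: S, m⟩ => ⟨c * ⟪v, w⟫, S, m⟩ :: (derivAlong v ⟨c, S, m⟩).map (cons w)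

def listEval (l : List (InvNormMonomial F)) (y : F) : ℝ := (l.map (eval · y)).sum

/-- The expansion of `D_{v₁} ⋯ D_{vₙ} ‖y‖⁻¹` for `L = [v₁, …, vₙ]`. -/
def expansion (L : List F) : List (InvNormMonomial F) :=
  L.foldr (fun v l => l.flatMap (derivAlong v)) [⟨1, [], 1⟩]

theorem eval_cons (w : F) (μ : InvNormMonomial F) (y : F) :
    (cons w μ).eval y = ⟪y, w⟫ * μ.eval y := by
  simp only [eval, cons, List.map_cons, List.prod_cons]; ring

@[simp] theorem listEval_nil (y : F) : listEval ([] : List (InvNormMonomial F)) y = 0 := rfl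

@[simp] theorem listEval_cons (μ : InvNormMonomial F) (l : List (InvNormMonomial F)) (y : F) :
    listEval (μ :: l) y = μ.eval y + listEval l y := List.sum_cons

theorem listEval_map_cons (w : F) (l : List (InvNormMonomial F)) (y : F) :
    listEval (l.map (cons w)) y = ⟪y, w⟫ * listEval l y := by
  induction l with
  | nil => simp
  | cons μ l ih => simp only [List.map_cons, listEval_cons, eval_cons, ih]; ring

theorem hasFDerivAt_eval (μ : InvNormMonomial F) {y : F} (hy : y ≠ 0) :
    ∃ D : F →L[ℝ] ℝ, HasFDerivAt μ.eval D y ∧ ∀ v, D v = listEval (μ.derivAlong v) y := by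
  obtain ⟨c, S, m⟩ := μ
  induction S with
  | nil =>
    refine ⟨c • (-(m : ℝ) * ‖y‖⁻¹ ^ (m + 2)) • innerSL ℝ y, ?_, fun v => ?_⟩
    · have h : eval ⟨c, [], m⟩ = fun z : F => c * ‖z‖⁻¹ ^ m := funext fun z => by simp [eval]
      rw [h]
      exact (hasFDerivAt_inv_norm_pow hy m).const_mul c
    · simp only [derivAlong, listEval_cons, listEval_nil, eval, List.map_cons, List.map_nil,
        List.prod_cons, List.prod_nil, smul_apply, coe_innerSL_apply, smul_eq_mul]
      ring
  | cons w S ih =>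
    obtain ⟨D, hD, hDv⟩ := ih
    refine ⟨⟪y, w⟫ • D + eval ⟨c, S, m⟩ y • innerSL ℝ w, ?_, fun v => ?_⟩
    · have hw : HasFDerivAt (⟪·, w⟫) (innerSL ℝ w) y := by
        have h : (⟪·, w⟫ : F → ℝ) = innerSL ℝ w := funext fun z => real_inner_comm w z
        rw [h]
        exact (innerSL ℝ w).hasFDerivAt
      show HasFDerivAt (fun z => (cons w ⟨c, S, m⟩).eval z) _ y
      simp only [eval_cons]
      exact hw.mul hD
    · simp only [add_apply, smul_apply, hDv, smul_eq_mul, coe_innerSL_apply, derivAlong,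
        listEval_cons, listEval_map_cons, eval, real_inner_comm]
      ring

theorem hasFDerivAt_listEval (l : List (InvNormMonomial F)) {y : F} (hy : y ≠ 0) :
    ∃ D : F →L[ℝ] ℝ, HasFDerivAt (listEval l) D y ∧
      ∀ v, D v = listEval (l.flatMap (derivAlong v)) y := by
  induction l with
  | nil => exact ⟨0, hasFDerivAt_const (0 : ℝ) y, by simp⟩
  | cons μ l ih =>
    obtain ⟨D₁, hD₁, hD₁v⟩ := μ.hasFDerivAt_eval hy
    obtain ⟨D₂, hD₂, hD₂v⟩ := ih
    refine ⟨D₁ + D₂, hD₁.add hD₂, fun v => ?_⟩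
    simp only [add_apply, hD₁v, hD₂v, List.flatMap_cons, listEval, List.map_append, List.sum_append]

theorem coeffSum_derivAlong_le {v : F} (hv : ‖v‖ ≤ 1) (μ : InvNormMonomial F)
    (hμ : ∀ w ∈ μ.factors, ‖w‖ ≤ 1) :
    coeffSum (μ.derivAlong v) ≤ (μ.factors.length + μ.power) * |μ.coeff| := by
  obtain ⟨c, S, m⟩ := μ
  induction S with
  | nil => simp [derivAlong, coeffSum, abs_mul]
  | cons w S ih =>
    have hvw : |c * ⟪v, w⟫| ≤ |c| := by
      rw [abs_mul]
      refine mul_le_of_le_one_right (abs_nonneg c) ((abs_real_inner_le_norm v w).trans ?_)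
      exact mul_le_one₀ hv (norm_nonneg w) (hμ w List.mem_cons_self)
    have ih := ih fun u hu => hμ u (List.mem_cons_of_mem w hu)
    calc coeffSum (derivAlong v ⟨c, w :: S, m⟩)
        = |c * ⟪v, w⟫| + coeffSum (derivAlong v ⟨c, S, m⟩) := by
          simp [derivAlong, coeffSum, cons, Function.comp_def]
      _ ≤ |c| + (S.length + m) * |c| := add_le_add hvw ih
      _ = ((w :: S).length + m) * |c| := by push_cast [List.length_cons]; ring

theorem factors_of_mem_derivAlong {v : F} {μ ν : InvNormMonomial F} (hν : ν ∈ μ.derivAlong v) :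
    (∀ u ∈ ν.factors, u = v ∨ u ∈ μ.factors) ∧ ν.factors.length ≤ μ.factors.length + 1 ∧
      ν.power + μ.factors.length = μ.power + ν.factors.length + 1 := by
  obtain ⟨c, S, m⟩ := μ
  induction S generalizing ν with
  | nil =>
    simp only [derivAlong, List.mem_singleton] at hν
    subst hν
    simp
  | cons w S ih =>
    simp only [derivAlong, List.mem_cons, List.mem_map] at hν
    rcases hν with rfl | ⟨ν, hν, rfl⟩
    · simp +contextual only [List.mem_cons, List.length_cons, or_true, implies_true,
        true_and]
      omega
    · obtain ⟨h₁, h₂, h₃⟩ := ih hν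
      refine ⟨?_, by simp [cons] at *; omega, by simp [cons] at *; omega⟩
      simp only [cons, List.mem_cons]
      grind

theorem factors_of_mem_expansion {L : List F} {μ : InvNormMonomial F} (hμ : μ ∈ expansion L) :
    (∀ w ∈ μ.factors, w ∈ L) ∧ μ.factors.length ≤ L.length ∧
      μ.power = L.length + 1 + μ.factors.length := by
  induction L generalizing μ with
  | nil => simp_all [expansion]
  | cons v L ih =>
    obtain ⟨ν, hν, hμν⟩ := List.mem_flatMap.mp hμ
    obtain ⟨h₁, h₂, h₃⟩ := factors_of_mem_derivAlong hμν
    obtain ⟨h₁', h₂', h₃'⟩ := ih hν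
    refine ⟨fun w hw => ?_, by simp; omega, by simp; omega⟩
    rcases h₁ w hw with rfl | hw
    exacts [List.mem_cons_self, List.mem_cons_of_mem v (h₁' w hw)]

theorem coeffSum_expansion_le {L : List F} (hL : ∀ v ∈ L, ‖v‖ ≤ 1) :
    coeffSum (expansion L) ≤ 3 ^ L.length * L.length ! := by
  induction L with
  | nil => simp [expansion, coeffSum]
  | cons v L ih =>
    have hL' : ∀ u ∈ L, ‖u‖ ≤ 1 := fun u hu => hL u (List.mem_cons_of_mem v hu)
    have hstep : ∀ μ ∈ expansion L, coeffSum (μ.derivAlong v) ≤ (3 * L.length + 1) * |μ.coeff| := by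
      intro μ hμ
      obtain ⟨h₁, h₂, h₃⟩ := factors_of_mem_expansion hμ
      refine (coeffSum_derivAlong_le (hL v List.mem_cons_self) μ
        fun w hw => hL' w (h₁ w hw)).trans ?_
      refine mul_le_mul_of_nonneg_right ?_ (abs_nonneg _)
      exact_mod_cast (by omega : μ.factors.length + μ.power ≤ 3 * L.length + 1)
    calc coeffSum (expansion (v :: L))
        = ((expansion L).map fun μ => coeffSum (μ.derivAlong v)).sum := by
          simp [expansion, coeffSum, List.flatMap_def, List.sum_flatten, Function.comp_def]
      _ ≤ ((expansion L).map fun μ => (3 * (L.length : ℝ) + 1) * |μ.coeff|).sum :=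
          List.sum_le_sum hstep
      _ = (3 * (L.length : ℝ) + 1) * coeffSum (expansion L) := List.sum_map_mul_left _ _ _
      _ ≤ (3 * ((L.length : ℝ) + 1)) * (3 ^ L.length * L.length !) :=
          mul_le_mul (by linarith) (ih hL') (coeffSum_nonneg _) (by positivity)
      _ = 3 ^ (v :: L).length * (v :: L).length ! := by
          simp only [List.length_cons, pow_succ, Nat.factorial_succ]; push_cast; ring

theorem abs_prod_inner_le {S : List F} (hS : ∀ w ∈ S, ‖w‖ ≤ 1) (y : F) :
    |(S.map (⟪y, ·⟫)).prod| ≤ ‖y‖ ^ S.length := by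
  induction S with
  | nil => simp
  | cons w S ih =>
    rw [List.map_cons, List.prod_cons, abs_mul, List.length_cons, pow_succ']
    have hw : |⟪y, w⟫| ≤ ‖y‖ := (abs_real_inner_le_norm y w).trans
      (mul_le_of_le_one_right (norm_nonneg y) (hS w List.mem_cons_self))
    gcongr
    exact ih fun u hu => hS u (List.mem_cons_of_mem w hu)

theorem abs_eval_le (μ : InvNormMonomial F) (hμ : ∀ w ∈ μ.factors, ‖w‖ ≤ 1) {k : ℕ}
    (hk : μ.power = k + μ.factors.length) (y : F) :
    |μ.eval y| ≤ |μ.coeff| * ‖y‖⁻¹ ^ k := by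
  calc |μ.eval y| = |μ.coeff| * |(μ.factors.map (⟪y, ·⟫)).prod| * ‖y‖⁻¹ ^ μ.power := by
        simp [eval, abs_mul]
    _ ≤ |μ.coeff| * ‖y‖ ^ μ.factors.length * ‖y‖⁻¹ ^ μ.power := by
        gcongr; exact abs_prod_inner_le hμ y
    _ = |μ.coeff| * (‖y‖ * ‖y‖⁻¹) ^ μ.factors.length * ‖y‖⁻¹ ^ k := by rw [hk]; ring
    _ ≤ |μ.coeff| * 1 * ‖y‖⁻¹ ^ k := by
        gcongr; exact pow_le_one₀ (by positivity) mul_inv_le_one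
    _ = |μ.coeff| * ‖y‖⁻¹ ^ k := by rw [mul_one]

theorem abs_listEval_expansion_le {L : List F} (hL : ∀ v ∈ L, ‖v‖ ≤ 1) (y : F) :
    |listEval (expansion L) y| ≤ 3 ^ L.length * L.length ! * ‖y‖⁻¹ ^ (L.length + 1) :=
  calc |listEval (expansion L) y| ≤ ((expansion L).map fun μ => |μ.eval y|).sum := by
        simpa [listEval, Function.comp_def] using
          List.le_sum_of_subadditive (|·|) abs_zero.le abs_add_le ((expansion L).map (eval · y))
    _ ≤ ((expansion L).map fun μ => |μ.coeff| * ‖y‖⁻¹ ^ (L.length + 1)).sum := by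
        refine List.sum_le_sum fun μ hμ => ?_
        obtain ⟨h₁, -, h₃⟩ := factors_of_mem_expansion hμ
        exact μ.abs_eval_le (fun w hw => hL w (h₁ w hw)) h₃ y
    _ = coeffSum (expansion L) * ‖y‖⁻¹ ^ (L.length + 1) := List.sum_map_mul_right _ _ _
    _ ≤ 3 ^ L.length * L.length ! * ‖y‖⁻¹ ^ (L.length + 1) := by
        gcongr; exact coeffSum_expansion_le hL

end InvNormMonomial

end

section DirDeriv

variable {X : Type*} [NormedAddCommGroup X] [NormedSpace ℝ X]
  {Y : Type*} [NormedAddCommGroup Y] [NormedSpace ℝ Y]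

theorem Dense.uniqueDiffWithinAt {s : Set X} (hs : Dense s) (x : X) : UniqueDiffWithinAt ℝ s x := by
  rw [uniqueDiffWithinAt_iff, ← tangentConeAt_closure, hs.closure_eq, tangentConeAt_univ]
  simp

theorem fderiv_apply_eq_zero_of_forall_add_smul_eq {b : X → Y} {x v : X}
    (hb : ∀ t : ℝ, b (x + t • v) = b x) : fderiv ℝ b x v = 0 := by
  by_cases hd : DifferentiableAt ℝ b x
  · rw [← hd.lineDeriv_eq_fderiv, lineDeriv, funext hb, deriv_const]
  · rw [fderiv_zero_of_not_differentiableAt hd, zero_apply]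

theorem fderiv_eq_of_eqOn_inter_dense {f g : X → Y} {O U : Set X} {x : X} (hO : Dense O)
    (hU : U ∈ 𝓝 x) (h : EqOn f g (O ∩ U)) (hf : DifferentiableAt ℝ f x)
    (hg : DifferentiableAt ℝ g x) : fderiv ℝ f x = fderiv ℝ g x := by
  have hu : UniqueDiffWithinAt ℝ (O ∩ U) x := (hO.uniqueDiffWithinAt x).inter hU
  have hx : f x = g x := by
    have hne : (𝓝[O ∩ U] x).NeBot := mem_closure_iff_nhdsWithin_neBot.mp hu.2
    exact tendsto_nhds_unique_of_eventuallyEq (hf.continuousAt.tendsto.mono_left nhdsWithin_le_nhds)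
      (hg.continuousAt.tendsto.mono_left nhdsWithin_le_nhds) (eventually_nhdsWithin_of_forall h)
  exact hu.eq hf.hasFDerivAt.hasFDerivWithinAt (hg.hasFDerivAt.hasFDerivWithinAt.congr h hx)

theorem dense_setOf_apply_ne_zero {ℓ : X →L[ℝ] Y} (hℓ : ℓ ≠ 0) : Dense {x | ℓ x ≠ 0} := by
  have h : {x | ℓ x ≠ 0} = ((LinearMap.ker (ℓ : X →ₗ[ℝ] Y) : Submodule ℝ X) : Set X)ᶜ := by
    ext; simp
  rw [h, ← interior_eq_empty_iff_dense_compl, ← Set.not_nonempty_iff_eq_empty]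
  intro hne
  apply hℓ
  ext x
  have := (Submodule.eq_top_of_nonempty_interior' _ hne).symm ▸ Submodule.mem_top (x := x)
  simpa using this

theorem isOpen_setOf_forall_apply_ne_zero {ι : Type*} [Finite ι] (ℓ : ι → X →L[ℝ] Y) :
    IsOpen {x | ∀ t, ℓ t ≠ 0 → ℓ t x ≠ 0} := by
  simp only [ofPred_forall]
  refine isOpen_iInter_of_finite fun t => ?_
  by_cases hℓ : ℓ t = 0
  · simp [hℓ]
  · simpa [hℓ] using isOpen_ne_fun (ℓ t).continuous continuous_const

theorem dense_setOf_forall_apply_ne_zero {ι : Type*} [Finite ι] (ℓ : ι → X →L[ℝ] Y) :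
    Dense {x | ∀ t, ℓ t ≠ 0 → ℓ t x ≠ 0} := by
  simp only [ofPred_forall, ← sInter_range]
  refine (finite_range _).dense_sInter ?_ ?_ <;> rintro _ ⟨t, rfl⟩ <;> by_cases hℓ : ℓ t = 0
  · simp [hℓ]
  · simpa [hℓ] using isOpen_ne_fun (ℓ t).continuous continuous_const
  · simp [hℓ]
  · simpa [hℓ] using dense_setOf_apply_ne_zero hℓ

noncomputable def dirDeriv (v : X) (f : X → Y) : X → Y := fun x => fderiv ℝ f x v

noncomputable def iteratedDirDeriv (L : List X) (f : X → Y) : X → Y := L.foldr dirDeriv f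

theorem iteratedDirDeriv_append (L₁ L₂ : List X) (f : X → Y) :
    iteratedDirDeriv (L₁ ++ L₂) f = iteratedDirDeriv L₁ (iteratedDirDeriv L₂ f) :=
  List.foldr_append

theorem iterate_dirDeriv (v : X) (n : ℕ) (f : X → Y) :
    (dirDeriv v)^[n] f = iteratedDirDeriv (List.replicate n v) f := by
  induction n with
  | zero => rfl
  | succ n ih => rw [Function.iterate_succ_apply', ih, List.replicate_succ]; rfl

theorem fderiv_add_apply_eq_of_forall_add_smul_eq {h b : X → Y} {x v : X}
    (hh : DifferentiableAt ℝ h x) (hb : DifferentiableAt ℝ b x)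
    (hbv : ∀ t : ℝ, b (x + t • v) = b x) : fderiv ℝ (h + b) x v = fderiv ℝ h x v := by
  rw [fderiv_add hh hb, add_apply, fderiv_apply_eq_zero_of_forall_add_smul_eq hbv, add_zero]

variable {H : List X → X → Y} {b : X → Y} {D Ω O : Set X}

theorem iteratedDirDeriv_add_eqOn (hΩ : IsOpen Ω) (hO : IsOpen O)
    (hH : ∀ L, ∀ x ∈ Ω, ∃ H' : X →L[ℝ] Y, HasFDerivAt (H L) H' x ∧ ∀ v, H' v = H (v :: L) x)
    (hb : ∀ x ∈ O, DifferentiableAt ℝ b x) (hbD : ∀ v ∈ D, ∀ x (t : ℝ), b (x + t • v) = b x)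
    {L : List X} (hL : L ≠ []) (hLD : ∀ v ∈ L, v ∈ D) :
    EqOn (iteratedDirDeriv L (H [] + b)) (H L) (O ∩ Ω) := by
  induction L with
  | nil => exact absurd rfl hL
  | cons v L ih =>
    intro x hx
    show fderiv ℝ (iteratedDirDeriv L (H [] + b)) x v = H (v :: L) x
    obtain ⟨H', hH', hH'v⟩ := hH L x hx.2
    rcases eq_or_ne L [] with rfl | hL'
    · rw [iteratedDirDeriv, List.foldr_nil, fderiv_add_apply_eq_of_forall_add_smul_eq
        hH'.differentiableAt (hb x hx.1) (hbD v (hLD v List.mem_cons_self) x), hH'.fderiv, hH'v]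
    · have h := ih hL' fun u hu => hLD u (List.mem_cons_of_mem v hu)
      rw [(h.eventuallyEq_of_mem ((hO.inter hΩ).mem_nhds hx)).fderiv_eq, hH'.fderiv, hH'v]

/-- Where `b` is differentiable it is killed by every derivative along `D`. At the other points,
a derivative that exists is already determined on the dense set `O` (unique differentiability),
and one that does not exist is the junk value `0` of `fderiv`. -/
theorem iteratedDirDeriv_add_eq_or_eq_zero (hΩ : IsOpen Ω) (hO : IsOpen O) (hOd : Dense O)
    (hH : ∀ L, ∀ x ∈ Ω, ∃ H' : X →L[ℝ] Y, HasFDerivAt (H L) H' x ∧ ∀ v, H' v = H (v :: L) x)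
    (hb : ∀ x ∈ O, DifferentiableAt ℝ b x) (hbD : ∀ v ∈ D, ∀ x (t : ℝ), b (x + t • v) = b x)
    {L : List X} (hL : L ≠ []) (hLD : ∀ v ∈ L, v ∈ D) {x : X} (hx : x ∈ Ω) :
    iteratedDirDeriv L (H [] + b) x = H L x ∨ iteratedDirDeriv L (H [] + b) x = 0 := by
  obtain ⟨v, L, rfl⟩ := List.exists_cons_of_ne_nil hL
  show fderiv ℝ (iteratedDirDeriv L (H [] + b)) x v = H (v :: L) x ∨
    fderiv ℝ (iteratedDirDeriv L (H [] + b)) x v = 0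
  by_cases hd : DifferentiableAt ℝ (iteratedDirDeriv L (H [] + b)) x
  swap
  · rw [fderiv_zero_of_not_differentiableAt hd]
    exact Or.inr rfl
  left
  obtain ⟨H', hH', hH'v⟩ := hH L x hx
  rcases eq_or_ne L [] with rfl | hL'
  · have hbx : DifferentiableAt ℝ b x := by
      simpa only [iteratedDirDeriv, List.foldr_nil, add_sub_cancel_left] using
        hd.sub hH'.differentiableAt
    rw [iteratedDirDeriv, List.foldr_nil, fderiv_add_apply_eq_of_forall_add_smul_eq
      hH'.differentiableAt hbx (hbD v (hLD v List.mem_cons_self) x), hH'.fderiv, hH'v]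
  · have h := iteratedDirDeriv_add_eqOn hΩ hO hH hb hbD hL'
      fun u hu => hLD u (List.mem_cons_of_mem v hu)
    rw [fderiv_eq_of_eqOn_inter_dense hOd (hΩ.mem_nhds hx) h hd hH'.differentiableAt, hH'.fderiv,
      hH'v]

end DirDeriv

section InvNormSum

open InvNormMonomial

variable {X : Type*} [NormedAddCommGroup X] [NormedSpace ℝ X]
  {E : Type*} [NormedAddCommGroup E] [InnerProductSpace ℝ E] {ι : Type*}

theorem differentiableAt_inv_norm_apply {ℓ : X →L[ℝ] E} {x : X} (hx : ℓ ≠ 0 → ℓ x ≠ 0) :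
    DifferentiableAt ℝ (fun x => ‖ℓ x‖⁻¹) x := by
  by_cases hℓ : ℓ = 0
  · simp [hℓ]
  · exact (ℓ.differentiableAt.norm ℝ (hx hℓ)).inv (norm_ne_zero_iff.mpr (hx hℓ))

/-- `∑_{t ∈ G} c t * D_{v₁} ⋯ D_{vₙ} ‖ℓ t x‖⁻¹`, computed through the monomial expansions. -/
noncomputable def regularDerivSum (c : ι → ℝ) (ℓ : ι → X →L[ℝ] E) (G : Finset ι) (L : List X)
    (x : X) : ℝ :=
  ∑ t ∈ G, c t * listEval (expansion (L.map (ℓ t))) (ℓ t x)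

theorem regularDerivSum_nil (c : ι → ℝ) (ℓ : ι → X →L[ℝ] E) (G : Finset ι) :
    regularDerivSum c ℓ G [] = fun x => ∑ t ∈ G, c t * ‖ℓ t x‖⁻¹ := by
  funext x
  simp [regularDerivSum, expansion, listEval, eval]

theorem hasFDerivAt_regularDerivSum (c : ι → ℝ) (ℓ : ι → X →L[ℝ] E) (G : Finset ι) (L : List X)
    {x : X} (hx : ∀ t ∈ G, ℓ t x ≠ 0) :
    ∃ D : X →L[ℝ] ℝ, HasFDerivAt (regularDerivSum c ℓ G L) D x ∧
      ∀ v, D v = regularDerivSum c ℓ G (v :: L) x := by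
  have h : ∀ t ∈ G, ∃ D : X →L[ℝ] ℝ,
      HasFDerivAt (fun x => c t * listEval (expansion (L.map (ℓ t))) (ℓ t x)) D x ∧
        ∀ v, D v = c t * listEval (expansion ((v :: L).map (ℓ t))) (ℓ t x) := by
    intro t ht
    obtain ⟨D, hD, hDv⟩ := hasFDerivAt_listEval (expansion (L.map (ℓ t))) (hx t ht)
    exact ⟨c t • D.comp (ℓ t), (hD.comp x (ℓ t).hasFDerivAt).const_mul (c t),
      fun v => by simp only [smul_apply, ContinuousLinearMap.comp_apply, hDv, smul_eq_mul]; rfl⟩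
  choose! D hD hDv using h
  refine ⟨∑ t ∈ G, D t, ?_, fun v => ?_⟩
  · exact HasFDerivAt.fun_sum hD
  · simp only [_root_.sum_apply, regularDerivSum]
    exact Finset.sum_congr rfl fun t ht => hDv t ht v

theorem abs_regularDerivSum_le (c : ι → ℝ) (ℓ : ι → X →L[ℝ] E) (G : Finset ι) {L : List X}
    (hL : ∀ t ∈ G, ∀ v ∈ L, ‖ℓ t v‖ ≤ 1) {ρ : ℝ} (hρ : 0 < ρ) {x : X}
    (hx : ∀ t ∈ G, ρ < ‖ℓ t x‖) :
    |regularDerivSum c ℓ G L x| ≤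
      (∑ t ∈ G, |c t|) * (3 ^ L.length * L.length ! * ρ⁻¹ ^ (L.length + 1)) := by
  rw [Finset.sum_mul]
  refine (Finset.abs_sum_le_sum_abs _ _).trans (Finset.sum_le_sum fun t ht => ?_)
  rw [abs_mul]
  gcongr
  have hLt : ∀ w ∈ L.map (ℓ t), ‖w‖ ≤ 1 := by
    simpa only [List.forall_mem_map] using hL t ht
  refine (abs_listEval_expansion_le hLt (ℓ t x)).trans ?_
  rw [List.length_map]
  gcongr
  exact (hx t ht).le

theorem abs_iteratedDirDeriv_sum_inv_norm_le [Fintype ι] (c : ι → ℝ) (ℓ : ι → X →L[ℝ] E)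
    {D Ω : Set X} (hΩ : IsOpen Ω) (G : Finset ι) (hG : ∀ t ∉ G, ∀ v ∈ D, ℓ t v = 0)
    (hGD : ∀ t ∈ G, ∀ v ∈ D, ‖ℓ t v‖ ≤ 1) {ρ : ℝ} (hρ : 0 < ρ)
    (hGΩ : ∀ t ∈ G, ∀ x ∈ Ω, ρ < ‖ℓ t x‖) {L : List X} (hL : L ≠ []) (hLD : ∀ v ∈ L, v ∈ D)
    {x : X} (hx : x ∈ Ω) :
    |iteratedDirDeriv L (fun x => ∑ t, c t * ‖ℓ t x‖⁻¹) x| ≤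
      (∑ t, |c t|) * (3 ^ L.length * L.length ! * ρ⁻¹ ^ (L.length + 1)) := by
  classical
  set b : X → ℝ := fun x => ∑ t ∈ Gᶜ, c t * ‖ℓ t x‖⁻¹
  have hsplit : (fun x => ∑ t, c t * ‖ℓ t x‖⁻¹) = regularDerivSum c ℓ G [] + b := by
    rw [regularDerivSum_nil]
    funext x
    exact (Finset.sum_add_sum_compl G _).symm
  have hGne : ∀ x ∈ Ω, ∀ t ∈ G, ℓ t x ≠ 0 := fun x hx t ht =>
    norm_pos_iff.mp (hρ.trans (hGΩ t ht x hx))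
  have hb : ∀ x ∈ {x | ∀ t, ℓ t ≠ 0 → ℓ t x ≠ 0}, DifferentiableAt ℝ b x := fun x hx =>
    DifferentiableAt.fun_sum fun t _ => (differentiableAt_inv_norm_apply (hx t)).const_mul _
  have hbD : ∀ v ∈ D, ∀ x (s : ℝ), b (x + s • v) = b x := fun v hv x s =>
    Finset.sum_congr rfl fun t ht => by
      rw [map_add, map_smul, hG t (Finset.mem_compl.mp ht) v hv, smul_zero, add_zero]
  rw [hsplit]
  rcases iteratedDirDeriv_add_eq_or_eq_zero hΩ (isOpen_setOf_forall_apply_ne_zero ℓ)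
    (dense_setOf_forall_apply_ne_zero ℓ)
    (fun L x hx => hasFDerivAt_regularDerivSum c ℓ G L (hGne x hx)) hb hbD hL hLD hx with h | h
  · rw [h]
    refine (abs_regularDerivSum_le c ℓ G (fun t ht v hv => hGD t ht v (hLD v hv)) hρ
      fun t ht => hGΩ t ht x hx).trans ?_
    gcongr
    exact G.subset_univ
  · rw [h, abs_zero]
    positivity

end InvNormSum

section Coulomb

variable {N : ℕ}

noncomputable def coulombForm :
    Fin N ⊕ (Fin N × Fin N) → (Fin N → EuclideanSpace ℝ (Fin 3)) →L[ℝ] EuclideanSpace ℝ (Fin 3)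
  | .inl i => ContinuousLinearMap.proj i
  | .inr p => (ContinuousLinearMap.proj p.2 : (Fin N → EuclideanSpace ℝ (Fin 3)) →L[ℝ] _) -
      ContinuousLinearMap.proj p.1

/-- The pairs `(j, k)` with `j ≥ k` get coefficient `0`, so that all pairs can be summed over. -/
def coulombCoeff (N : ℕ) (Z : ℝ) : Fin N ⊕ (Fin N × Fin N) → ℝ
  | .inl _ => -Z
  | .inr p => if p.1 < p.2 then 1 else 0

theorem coulombV_eq_sum (Z : ℝ) :
    coulombV N Z = fun x => ∑ t, coulombCoeff N Z t * ‖coulombForm t x‖⁻¹ := by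
  funext x
  rw [coulombV, Fintype.sum_sum_type, Finset.sum_filter, ← Finset.sum_neg_distrib]
  congr 1 <;> refine Finset.sum_congr rfl fun t _ => ?_
  · simp [coulombForm, coulombCoeff, div_eq_mul_inv]
  · split_ifs <;> simp [coulombForm, coulombCoeff, *]

theorem norm_dirVec_apply_le (P : Finset (Fin N)) (i : Fin 3) (j : Fin N) :
    ‖dirVec N P i j‖ ≤ 1 := by
  unfold dirVec
  split_ifs with hj
  · rw [norm_smul, PiLp.norm_single, norm_one, mul_one, norm_inv, Real.norm_eq_abs,
      abs_of_nonneg (Real.sqrt_nonneg _)]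
    refine inv_le_one_of_one_le₀ (Real.one_le_sqrt.mpr ?_)
    exact_mod_cast Finset.card_pos.mpr ⟨j, hj⟩
  · simp

theorem norm_coulombForm_dirVec_le (P : Finset (Fin N)) (i : Fin 3) (t : Fin N ⊕ (Fin N × Fin N)) :
    ‖coulombForm t (dirVec N P i)‖ ≤ 1 := by
  rcases t with j | ⟨j, k⟩
  · exact norm_dirVec_apply_le P i j
  · simp only [coulombForm, sub_apply, ContinuousLinearMap.proj_apply]
    by_cases hj : j ∈ P <;> by_cases hk : k ∈ P
    · simp [dirVec, hj, hk]
    · simpa [dirVec, hk] using norm_dirVec_apply_le P i j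
    · simpa [dirVec, hj] using norm_dirVec_apply_le P i k
    · simp [dirVec, hj, hk]

theorem lt_norm_coulombForm_of_mem_UP {P : Finset (Fin N)} {ρ : ℝ}
    {x : Fin N → EuclideanSpace ℝ (Fin 3)} (hx : x ∈ UP P ρ) {t : Fin N ⊕ (Fin N × Fin N)}
    {i : Fin 3} (ht : coulombForm t (dirVec N P i) ≠ 0) : ρ < ‖coulombForm t x‖ := by
  rcases t with j | ⟨j, k⟩
  · by_cases hj : j ∈ P
    · exact hx.1 j hj
    · simp [coulombForm, dirVec, hj] at ht
  · simp only [coulombForm, sub_apply, ContinuousLinearMap.proj_apply] at ht ⊢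
    by_cases hj : j ∈ P <;> by_cases hk : k ∈ P
    · simp [dirVec, hj, hk] at ht
    · exact norm_sub_rev (x k) (x j) ▸ hx.2 j hj k hk
    · exact hx.2 k hk j hj
    · simp [dirVec, hj, hk] at ht

theorem isOpen_UP (P : Finset (Fin N)) (ρ : ℝ) : IsOpen (UP P ρ) := by
  have h : UP P ρ = (⋂ j ∈ P, {x | ρ < ‖x j‖}) ∩ ⋂ j ∈ P, ⋂ k ∈ Pᶜ, {x | ρ < ‖x j - x k‖} := by
    ext x; simp [UP]
  rw [h]
  exact (isOpen_biInter_finset fun j _ => isOpen_lt continuous_const (by fun_prop)).inter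
    (isOpen_biInter_finset fun j _ => isOpen_biInter_finset fun k _ =>
      isOpen_lt continuous_const (by fun_prop))

end Coulomb

section Directions

variable {N M : ℕ}

/-- The directions of `∂^α_{x_𝐏}`, listed from the outermost derivative to the innermost. -/
noncomputable def familyDirections (P : Fin M → Finset (Fin N)) (α : Fin M → Fin 3 → ℕ) :
    List (Fin N → EuclideanSpace ℝ (Fin 3)) :=
  (List.ofFn fun s =>
    (List.ofFn fun i => List.replicate (α s i) (dirVec N (P s) i)).flatten).flatten

theorem pderivPMulti_eq_iteratedDirDeriv (P : Finset (Fin N)) (α : Fin 3 → ℕ)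
    (f : (Fin N → EuclideanSpace ℝ (Fin 3)) → ℝ) :
    pderivPMulti P α f =
      iteratedDirDeriv (List.ofFn fun i => List.replicate (α i) (dirVec N P i)).flatten f := by
  simp only [List.ofFn_succ, List.ofFn_zero, List.flatten_cons, List.flatten_nil, List.append_nil,
    iteratedDirDeriv_append, ← iterate_dirDeriv]
  rfl

theorem pderivPFamily_eq_iteratedDirDeriv (P : Fin M → Finset (Fin N)) (α : Fin M → Fin 3 → ℕ)
    (f : (Fin N → EuclideanSpace ℝ (Fin 3)) → ℝ) :
    pderivPFamily M P α f = iteratedDirDeriv (familyDirections P α) f := by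
  induction M with
  | zero => rfl
  | succ M ih =>
    rw [pderivPFamily, ih, pderivPMulti_eq_iteratedDirDeriv, ← iteratedDirDeriv_append]
    simp only [familyDirections, List.ofFn_succ, List.flatten_cons]
    rfl

theorem length_familyDirections (P : Fin M → Finset (Fin N)) (α : Fin M → Fin 3 → ℕ) :
    (familyDirections P α).length = ∑ s, ∑ i, α s i := by
  simp [familyDirections, List.length_flatten, List.sum_ofFn, Function.comp_def, Fin.sum_univ_three,
    add_assoc]

theorem exists_eq_dirVec_of_mem_familyDirections {P : Fin M → Finset (Fin N)}
    {α : Fin M → Fin 3 → ℕ} {v : Fin N → EuclideanSpace ℝ (Fin 3)}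
    (hv : v ∈ familyDirections P α) : ∃ s i, v = dirVec N (P s) i := by
  simp only [familyDirections, List.mem_flatten, List.mem_ofFn] at hv
  obtain ⟨_, ⟨s, rfl⟩, hv⟩ := hv
  simp only [List.mem_flatten, List.mem_ofFn] at hv
  obtain ⟨_, ⟨i, rfl⟩, hv⟩ := hv
  exact ⟨s, i, List.eq_of_mem_replicate hv⟩

end Directions

theorem mul_three_pow_mul_factorial_le {C r : ℝ} (hC : 0 ≤ C) (hr : 0 ≤ r) (n : ℕ) :
    C * (3 ^ n * n ! * r ^ (n + 1)) ≤ (3 * (1 + C) * (1 + r)) ^ (n + 1) * n ! := by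
  have hC' : C ≤ (1 + C) ^ (n + 1) :=
    (le_add_of_nonneg_left zero_le_one).trans (le_self_pow₀ (by linarith) n.succ_ne_zero)
  calc C * (3 ^ n * n ! * r ^ (n + 1)) = C * 3 ^ n * r ^ (n + 1) * n ! := by ring
    _ ≤ (1 + C) ^ (n + 1) * 3 ^ (n + 1) * (1 + r) ^ (n + 1) * n ! := by
        gcongr
        · norm_num
        · omega
        · linarith
    _ = (3 * (1 + C) * (1 + r)) ^ (n + 1) * n ! := by rw [mul_pow, mul_pow]; ring

theorem coulombV_derivative_bound_general (N M : ℕ) (Z : ℝ)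
    (P : Fin M → Finset (Fin N))
    (ε : ℝ) (hε : 0 < ε) :
    ∃ L > 0, ∀ α : Fin M → Fin 3 → ℕ, 1 ≤ ∑ s, ∑ i, α s i →
      ∀ x ∈ ⋂ s, UP (P s) (ε / 2),
        |pderivPFamily M P α (coulombV N Z) x|
          ≤ L ^ ((∑ s, ∑ i, α s i) + 1) * Nat.factorial (∑ s, ∑ i, α s i) := by
  classical
  set C := ∑ t, |coulombCoeff N Z t|
  refine ⟨3 * (1 + C) * (1 + (ε / 2)⁻¹), by positivity, fun α hα x hx => ?_⟩
  rw [pderivPFamily_eq_iteratedDirDeriv, coulombV_eq_sum, ← length_familyDirections]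
  refine (abs_iteratedDirDeriv_sum_inv_norm_le (coulombCoeff N Z) coulombForm
    (D := {v | ∃ s i, v = dirVec N (P s) i})
    (isOpen_iInter_of_finite fun s => isOpen_UP (P s) _)
    (Finset.univ.filter fun t => ∃ s i, coulombForm t (dirVec N (P s) i) ≠ 0) ?_ ?_
    (by positivity) ?_ ?_ (fun v hv => exists_eq_dirVec_of_mem_familyDirections hv) hx).trans
    (mul_three_pow_mul_factorial_le (by positivity) (by positivity) _)
  · rintro t ht _ ⟨s, i, rfl⟩
    simp only [Finset.mem_filter, Finset.mem_univ, true_and, not_exists, not_not] at ht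
    exact ht s i
  · rintro t - _ ⟨s, i, rfl⟩
    exact norm_coulombForm_dirVec_le (P s) i t
  · intro t ht x hx
    obtain ⟨s, i, hsi⟩ := (Finset.mem_filter.mp ht).2
    exact lt_norm_coulombForm_of_mem_UP (Set.mem_iInter.mp hx s) hsi
  · rw [← List.length_pos_iff_ne_nil, length_familyDirections]
    omega

/-- Analyticity estimates for the Coulomb potential: for each `ε > 0` there is
`L_V > 0` such that `|∂^α_{x_𝐏} V| ≤ L_V^{|α|+1} |α|!` on `∩_s U_{P_s}(ε/2)`
for all multiindices `α` with `|α| ≥ 1`. -/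
theorem coulombV_derivative_bound (N M : ℕ) (Z : ℝ) (hZ : 0 ≤ Z)
    (P : Fin M → Finset (Fin N)) (hP : ∀ s, (P s).Nonempty)
    (ε : ℝ) (hε : 0 < ε) :
    ∃ L > 0, ∀ α : Fin M → Fin 3 → ℕ, 1 ≤ ∑ s, ∑ i, α s i →
      ∀ x ∈ ⋂ s, UP (P s) (ε / 2),
        |pderivPFamily M P α (coulombV N Z) x|
          ≤ L ^ ((∑ s, ∑ i, α s i) + 1) * Nat.factorial (∑ s, ∑ i, α s i) :=
  coulombV_derivative_bound_general N M Z P ε hε
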